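/- Let k ≥ 3 be an integer and set α = k - 1 + √(k(k-2)) and β = k - 1 - √(k(k-2)). A positive integer N is simultaneously a k-gonal number and a centered k-gonal number (i.e., N = P(n;k) for some integer n ≥ 1 and N = C(m;k) for some integer m ≥ 1) if and only if there exists an integer i ≥ 0 such that (N : ℝ) = (k/(16(k-2))) · ((-2k² + 18k - 32)/k + α^(2i+1) + β^(2i+1)). -/

import Mathlib

/-!
Put `x = 2(k-2)n - (k-4)` and `y = 2m - 1`. Then `P(n;k) = C(m;k)` becomes the Pell-type equation
`x² - k(k-2)y² = 2k`, and `α = k - 1 + √(k(k-2))` is a unit of norm `1`. Multiplying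
`x + y√(k(k-2))` by `β = α⁻¹` keeps `n, m ≥ 1` and strictly decreases `m` unless `m = 1`, which
forces `n = 1`; so the common solutions are exactly `x + y√(k(k-2)) = (k + √(k(k-2))) αⁱ`.
Since `(k + √(k(k-2)))² = 2kα`, squaring gives `x² = k + k(α^(2i+1) + β^(2i+1))/2`, and
`N = (x² - (k-4)²) / (8(k-2))`.
-/

/-- The `n`-th `k`-gonal number: `P(n;k) = ((k-2)n² + (4-k)n)/2` (the numerator is always even). -/
def polygonal (k n : ℤ) : ℤ := ((k - 2) * n ^ 2 + (4 - k) * n) / 2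

/-- The `m`-th centered `k`-gonal number: `C(m;k) = (km² - km + 2)/2` (the numerator is always even). -/
def centered (k m : ℤ) : ℤ := (k * m ^ 2 - k * m + 2) / 2

lemma two_mul_polygonal (k n : ℤ) : 2 * polygonal k n = (k - 2) * n ^ 2 + (4 - k) * n := by
  have h : (k - 2) * n ^ 2 + (4 - k) * n = (k - 2) * (n * (n - 1)) + 2 * n := by ring
  refine Int.mul_ediv_cancel' ?_
  rw [h]
  exact dvd_add ((Int.even_mul_pred_self n).two_dvd.mul_left _) (dvd_mul_right 2 n)

lemma two_mul_centered (k m : ℤ) : 2 * centered k m = k * m ^ 2 - k * m + 2 := by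
  have h : k * m ^ 2 - k * m + 2 = k * (m * (m - 1)) + 2 := by ring
  refine Int.mul_ediv_cancel' ?_
  rw [h]
  exact dvd_add ((Int.even_mul_pred_self m).two_dvd.mul_left _) dvd_rfl

namespace PolygonalCentered

section Pell

variable {k x y : ℤ}

lemma le_of_pell (hk : 2 ≤ k) (h : x ^ 2 - k * (k - 2) * y ^ 2 = 2 * k) (hx : 0 < x)
    (hy : 1 ≤ y) : k ≤ x := by
  have hD : 0 ≤ k * (k - 2) := by nlinarith
  have hy2 : 1 ≤ y ^ 2 := by nlinarith
  have hsq : k ^ 2 ≤ x ^ 2 := by nlinarith [mul_le_mul_of_nonneg_left hy2 hD]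
  exact (pow_le_pow_iff_left₀ (by omega) hx.le two_ne_zero).1 hsq

/- `(x + y√(k(k-2))) (k - 1 - √(k(k-2))) = ((k-1)x - k(k-2)y) + ((k-1)y - x)√(k(k-2))`:
the descent lemmas below bound the two coordinates of this product. -/

lemma pell_descent_fst_pos (hk : 2 ≤ k) (h : x ^ 2 - k * (k - 2) * y ^ 2 = 2 * k) (hx : 0 < x) :
    0 < (k - 1) * x - k * (k - 2) * y := by
  have hD : 0 ≤ k * (k - 2) := by nlinarith
  have hDy : (k * (k - 2) * y) ^ 2 = k * (k - 2) * (x ^ 2 - 2 * k) := by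
    linear_combination (-(k * (k - 2))) * h
  have hsq : (k * (k - 2) * y) ^ 2 < ((k - 1) * x) ^ 2 := by nlinarith
  linarith [lt_of_pow_lt_pow_left₀ 2 (by nlinarith) hsq]

lemma pell_descent_snd_nonneg (hk : 2 ≤ k) (h : x ^ 2 - k * (k - 2) * y ^ 2 = 2 * k)
    (hy : 2 ≤ y) : -1 < (k - 1) * y - x := by
  have hky : 2 * (k - 1) ≤ (k - 1) * y := by nlinarith
  have hsq : x ^ 2 < ((k - 1) * y + 1) ^ 2 := by nlinarith
  linarith [lt_of_pow_lt_pow_left₀ 2 (by nlinarith) hsq]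

lemma pell_descent_snd_lt (hk : 2 ≤ k) (h : x ^ 2 - k * (k - 2) * y ^ 2 = 2 * k) (hx : 0 < x) :
    (k - 1) * y - x < y := by
  have hsq : ((k - 2) * y) ^ 2 < x ^ 2 := by nlinarith [sq_nonneg y]
  linarith [lt_of_pow_lt_pow_left₀ 2 hx.le hsq]

end Pell

variable {k : ℤ}

def IsSolution (k : ℤ) (p : ℤ × ℤ) : Prop :=
  (k - 2) * p.1 ^ 2 + (4 - k) * p.1 = k * p.2 ^ 2 - k * p.2 + 2

lemma polygonal_eq_centered_iff {n m : ℤ} :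
    polygonal k n = centered k m ↔ IsSolution k (n, m) := by
  simp only [IsSolution, ← two_mul_polygonal, ← two_mul_centered]
  omega

lemma IsSolution.fst_eq_one {n : ℤ} (hk : 2 ≤ k) (h : IsSolution k (n, 1)) (hn : 1 ≤ n) :
    n = 1 := by
  have hfac : ((k - 2) * n + 2) * (n - 1) = 0 := by
    unfold IsSolution at h
    linear_combination h
  rcases mul_eq_zero.1 hfac with h' | h'
  · nlinarith
  · linarith

def pellX (k : ℤ) (p : ℤ × ℤ) : ℤ := 2 * (k - 2) * p.1 - (k - 4)

def pellY (p : ℤ × ℤ) : ℤ := 2 * p.2 - 1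

lemma IsSolution.pell {p : ℤ × ℤ} (h : IsSolution k p) :
    pellX k p ^ 2 - k * (k - 2) * pellY p ^ 2 = 2 * k := by
  unfold IsSolution at h
  unfold pellX pellY
  linear_combination 4 * (k - 2) * h

/-- In the coordinates `pellX`, `pellY` this is multiplication by `k - 1 + √(k(k-2))`. -/
def step (k : ℤ) (p : ℤ × ℤ) : ℤ × ℤ :=
  ((k - 1) * p.1 + k * p.2 - (k - 2), (k - 2) * p.1 + (k - 1) * p.2 - (k - 3))

def unstep (k : ℤ) (p : ℤ × ℤ) : ℤ × ℤ :=
  ((k - 1) * p.1 - k * p.2 + 2, (k - 1) * p.2 - (k - 2) * p.1 - 1)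

lemma step_unstep (p : ℤ × ℤ) : step k (unstep k p) = p := by
  ext <;> simp only [step, unstep] <;> ring

lemma pellX_step (p : ℤ × ℤ) :
    pellX k (step k p) = (k - 1) * pellX k p + k * (k - 2) * pellY p := by
  simp only [pellX, pellY, step]; ring

lemma pellY_step (p : ℤ × ℤ) : pellY (step k p) = pellX k p + (k - 1) * pellY p := by
  simp only [pellX, pellY, step]; ring

lemma pellX_unstep (p : ℤ × ℤ) :
    pellX k (unstep k p) = (k - 1) * pellX k p - k * (k - 2) * pellY p := by
  simp only [pellX, pellY, unstep]; ring

lemma pellY_unstep (p : ℤ × ℤ) : pellY (unstep k p) = (k - 1) * pellY p - pellX k p := by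
  simp only [pellX, pellY, unstep]; ring

lemma IsSolution.step {p : ℤ × ℤ} (h : IsSolution k p) : IsSolution k (step k p) := by
  unfold IsSolution at *
  simp only [PolygonalCentered.step]
  linear_combination h

lemma IsSolution.unstep {p : ℤ × ℤ} (h : IsSolution k p) : IsSolution k (unstep k p) := by
  unfold IsSolution at *
  simp only [PolygonalCentered.unstep]
  linear_combination h

lemma one_le_step (hk : 2 ≤ k) {p : ℤ × ℤ} (h₁ : 1 ≤ p.1) (h₂ : 1 ≤ p.2) :
    1 ≤ (step k p).1 ∧ 1 ≤ (step k p).2 := by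
  simp only [step]
  constructor <;> nlinarith

lemma one_le_unstep (hk : 3 ≤ k) {p : ℤ × ℤ} (h : IsSolution k p) (h₁ : 1 ≤ p.1)
    (h₂ : 2 ≤ p.2) :
    1 ≤ (unstep k p).1 ∧ 1 ≤ (unstep k p).2 ∧ (unstep k p).2 < p.2 := by
  have hX : 0 < pellX k p := by unfold pellX; nlinarith
  have hY : 2 ≤ pellY p := by unfold pellY; omega
  have hY' := pell_descent_snd_nonneg (by omega) h.pell hY
  have hlt := pell_descent_snd_lt (by omega) h.pell hX
  rw [← pellY_unstep] at hY' hlt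
  unfold pellY at hY' hlt
  have hX' : 0 < pellX k (unstep k p) := by
    rw [pellX_unstep]
    exact pell_descent_fst_pos (by omega) h.pell hX
  have hkX' := le_of_pell (by omega) h.unstep.pell hX' (by unfold pellY; omega)
  unfold pellX at hkX'
  refine ⟨?_, by omega, by omega⟩
  nlinarith

def solution (k : ℤ) (i : ℕ) : ℤ × ℤ := (step k)^[i] (1, 1)

lemma solution_succ (i : ℕ) : solution k (i + 1) = step k (solution k i) :=
  Function.iterate_succ_apply' _ _ _

lemma isSolution_solution (i : ℕ) : IsSolution k (solution k i) := by
  induction i with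
  | zero => simp only [IsSolution, solution, Function.iterate_zero, id]; ring
  | succ i ih => rw [solution_succ]; exact ih.step

lemma one_le_solution (hk : 2 ≤ k) (i : ℕ) :
    1 ≤ (solution k i).1 ∧ 1 ≤ (solution k i).2 := by
  induction i with
  | zero => exact ⟨le_rfl, le_rfl⟩
  | succ i ih => rw [solution_succ]; exact one_le_step hk ih.1 ih.2

theorem exists_solution_eq (hk : 3 ≤ k) {p : ℤ × ℤ} (h : IsSolution k p) (h₁ : 1 ≤ p.1)
    (h₂ : 1 ≤ p.2) : ∃ i, solution k i = p := by
  induction hM : p.2.toNat using Nat.strong_induction_on generalizing p with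
  | _ M ih =>
  obtain ⟨n, m⟩ := p
  rcases h₂.eq_or_lt with rfl | h₂
  · exact ⟨0, by rw [h.fst_eq_one (by omega) h₁]; rfl⟩
  · obtain ⟨h₁', h₂', hlt⟩ := one_le_unstep hk h h₁ h₂
    obtain ⟨i, hi⟩ := ih _ (by omega) h.unstep h₁' h₂' rfl
    exact ⟨i + 1, by rw [solution_succ, hi, step_unstep]⟩

lemma pellX_add_pellY_mul_eq (σ : ℝ) (hσ : σ ^ 2 = k * (k - 2)) (i : ℕ) :
    (pellX k (solution k i) : ℝ) + pellY (solution k i) * σ = (k + σ) * (k - 1 + σ) ^ i := by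
  induction i with
  | zero => simp only [solution, Function.iterate_zero, id, pellX, pellY]; push_cast; ring
  | succ i ih =>
    rw [solution_succ, pellX_step, pellY_step, pow_succ]
    push_cast
    linear_combination (k - 1 + σ) * ih - pellY (solution k i) * hσ

lemma sq_pellX_add_pellY_mul_eq (σ : ℝ) (hσ : σ ^ 2 = k * (k - 2)) (i : ℕ) :
    ((pellX k (solution k i) : ℝ) + pellY (solution k i) * σ) ^ 2
      = 2 * k * (k - 1 + σ) ^ (2 * i + 1) := by
  rw [pellX_add_pellY_mul_eq σ hσ, pow_succ (k - 1 + σ : ℝ)]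
  linear_combination ((k - 1 + σ) ^ i) ^ 2 * hσ

noncomputable def closedForm (k : ℤ) (i : ℕ) : ℝ :=
  ((k : ℝ) / (16 * ((k : ℝ) - 2))) *
    ((-2 * (k : ℝ) ^ 2 + 18 * (k : ℝ) - 32) / (k : ℝ) +
      ((k : ℝ) - 1 + Real.sqrt ((k : ℝ) * ((k : ℝ) - 2))) ^ (2 * i + 1) +
      ((k : ℝ) - 1 - Real.sqrt ((k : ℝ) * ((k : ℝ) - 2))) ^ (2 * i + 1))

lemma closedForm_eq (hk : 3 ≤ k) (i : ℕ) :
    closedForm k i = polygonal k (solution k i).1 := by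
  have hk₂ : (k : ℝ) - 2 ≠ 0 := by
    have : (3 : ℝ) ≤ k := by exact_mod_cast hk
    linarith
  have hform : closedForm k i = ((-2 * k ^ 2 + 18 * k - 32) + k *
      ((k - 1 + √(k * (k - 2))) ^ (2 * i + 1) + (k - 1 - √(k * (k - 2))) ^ (2 * i + 1)))
        / (16 * (k - 2)) := by
    unfold closedForm
    field_simp
    ring
  set σ := √((k : ℝ) * ((k : ℝ) - 2))
  have hσ : σ ^ 2 = k * (k - 2) :=
    Real.sq_sqrt (by nlinarith [(by exact_mod_cast hk : (3 : ℝ) ≤ k)])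
  have hpell : ((pellX k (solution k i) : ℤ) : ℝ) ^ 2
      - k * (k - 2) * (pellY (solution k i) : ℝ) ^ 2 = 2 * k := by
    exact_mod_cast (isSolution_solution (k := k) i).pell
  have hP : (polygonal k (solution k i).1 : ℝ) * (8 * (k - 2))
      = (pellX k (solution k i) : ℝ) ^ 2 - (k - 4) ^ 2 := by
    have h2 : ((2 * polygonal k (solution k i).1 : ℤ) : ℝ) = _ :=
      congrArg (Int.cast (R := ℝ)) (two_mul_polygonal k (solution k i).1)
    simp only [pellX]
    push_cast at h2 ⊢
    linear_combination 4 * (k - 2) * h2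
  have hα := sq_pellX_add_pellY_mul_eq σ hσ i
  have hβ := sq_pellX_add_pellY_mul_eq (-σ) (by rw [neg_sq, hσ]) i
  rw [← sub_eq_add_neg] at hβ
  set x : ℝ := ((pellX k (solution k i) : ℤ) : ℝ)
  set y : ℝ := ((pellY (solution k i) : ℤ) : ℝ)
  have hsum : (k : ℝ) * ((k - 1 + σ) ^ (2 * i + 1) + (k - 1 - σ) ^ (2 * i + 1))
      = 2 * x ^ 2 - 2 * k := by
    linear_combination (-1 / 2 : ℝ) * (hα + hβ) + y ^ 2 * hσ - hpell
  rw [hform, hsum, div_eq_iff (mul_ne_zero (by norm_num) hk₂)]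
  linear_combination (-2 : ℝ) * hP

end PolygonalCentered

open PolygonalCentered in
theorem polygonal_and_centered_iff (k : ℤ) (hk : 3 ≤ k) (N : ℤ) :
    ((∃ n : ℤ, 1 ≤ n ∧ N = polygonal k n) ∧ (∃ m : ℤ, 1 ≤ m ∧ N = centered k m)) ↔
      (∃ i : ℕ, (N : ℝ) =
        ((k : ℝ) / (16 * ((k : ℝ) - 2))) *
          ((-2 * (k : ℝ) ^ 2 + 18 * (k : ℝ) - 32) / (k : ℝ) +
            ((k : ℝ) - 1 + Real.sqrt ((k : ℝ) * ((k : ℝ) - 2))) ^ (2 * i + 1) +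
            ((k : ℝ) - 1 - Real.sqrt ((k : ℝ) * ((k : ℝ) - 2))) ^ (2 * i + 1))) := by
  change _ ↔ ∃ i : ℕ, (N : ℝ) = closedForm k i
  simp only [closedForm_eq hk, Int.cast_inj]
  constructor
  · rintro ⟨⟨n, hn, rfl⟩, m, hm, hc⟩
    obtain ⟨i, hi⟩ := exists_solution_eq hk (polygonal_eq_centered_iff.1 hc) hn hm
    exact ⟨i, by rw [hi]⟩
  · rintro ⟨i, rfl⟩
    obtain ⟨h₁, h₂⟩ := one_le_solution (k := k) (by omega) i
    exact ⟨⟨_, h₁, rfl⟩, _, h₂, polygonal_eq_centered_iff.2 (isSolution_solution i)⟩
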